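/- Let n ≥ 3, ε > 0, v_ε(x) = ε^((n-2)/2)·((ε+xₙ)² + Σ_a x_a²)^(-(n-2)/2), and V a smooth vector field on ℝⁿ₊ with Vₙ = 0 and ∂ₙV_a = 0 on ∂ℝⁿ₊. Define S_{ik} = ∂ᵢVₖ + ∂ₖVᵢ − (2/n)(div V)δ_{ik} and ψ = Σ_l ∂_lv_ε·V_l + ((n−2)/(2n))·v_ε·div V. Assume ∂ₙS_{nn} = −(2n/(n−2))·v_ε⁻¹·∂ₙv_ε·S_{nn} on ∂ℝⁿ₊. Then for all x ∈ ∂ℝⁿ₊: ∂ₙψ(x) = −(1/(2(n−1)))·∂ₙv_ε(x)·S_{nn}(x) + (n/(n−2))·v_ε(x)⁻¹·∂ₙv_ε(x)·ψ(x). -/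

import Mathlib

open scoped BigOperators
open MeasureTheory

noncomputable section

abbrev E (n : ℕ) := EuclideanSpace ℝ (Fin n)

/-- Partial derivative in the `i`-th coordinate direction. -/
def pder {n : ℕ} (i : Fin n) (f : E n → ℝ) (x : E n) : ℝ :=
  fderiv ℝ f x (EuclideanSpace.single i 1)

/-- Euclidean Laplacian. -/
def lap {n : ℕ} (f : E n → ℝ) (x : E n) : ℝ :=
  ∑ i, pder i (pder i f) x

/-- The index of the last ("normal") coordinate `x_n`. -/
def nIdx (n : ℕ) (hn : 0 < n) : Fin n := ⟨n - 1, Nat.sub_lt hn one_pos⟩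

/-- The model function `v_ε` on the upper half-space. -/
def vE (n : ℕ) (hn : 0 < n) (ε : ℝ) (x : E n) : ℝ :=
  ε ^ (((n : ℝ) - 2) / 2) *
    ((ε + x (nIdx n hn)) ^ 2 + ∑ a ∈ Finset.univ.erase (nIdx n hn), x a ^ 2) ^
      (-(((n : ℝ) - 2) / 2))

/-- Divergence of a vector field. -/
def divV {n : ℕ} (V : E n → E n) (x : E n) : ℝ := ∑ i, pder i (fun z => V z i) x

/-- The conformal Killing operator `S_{ik} = ∂ᵢVₖ + ∂ₖVᵢ - (2/n)(div V)δ_{ik}`. -/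
def Smat {n : ℕ} (V : E n → E n) (i k : Fin n) (x : E n) : ℝ :=
  pder i (fun z => V z k) x + pder k (fun z => V z i) x -
    (2 / (n : ℝ)) * divV V x * (if i = k then 1 else 0)

/-- The correction term `ψ = Σ_l ∂_l v_ε · V_l + ((n-2)/(2n)) v_ε div V`. -/
def psiF (n : ℕ) (hn : 0 < n) (ε : ℝ) (V : E n → E n) (x : E n) : ℝ :=
  ∑ l, pder l (vE n hn ε) x * V x l +
    (((n : ℝ) - 2) / (2 * n)) * vE n hn ε x * divV V x


namespace DnPsi
variable {n : ℕ} {x : E n}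

lemma pder_eq_of_hasFDerivAt {f : E n → ℝ} {f' : E n →L[ℝ] ℝ}
    (h : HasFDerivAt f f' x) (i : Fin n) : pder i f x = f' (EuclideanSpace.single i 1) := by
  unfold pder; rw [h.fderiv]

lemma pder_congr {f g : E n → ℝ} (h : f =ᶠ[nhds x] g) (i : Fin n) :
    pder i f x = pder i g x := by
  unfold pder; rw [h.fderiv_eq]

lemma pder_add {f g : E n → ℝ} (hf : DifferentiableAt ℝ f x) (hg : DifferentiableAt ℝ g x)
    (i : Fin n) : pder i (fun z => f z + g z) x = pder i f x + pder i g x := by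
  unfold pder; rw [fderiv_fun_add hf hg]; simp

lemma pder_mul {f g : E n → ℝ} (hf : DifferentiableAt ℝ f x) (hg : DifferentiableAt ℝ g x)
    (i : Fin n) : pder i (fun z => f z * g z) x
      = pder i f x * g x + f x * pder i g x := by
  unfold pder; rw [fderiv_fun_mul hf hg]; simp; ring

lemma pder_sub {f g : E n → ℝ} (hf : DifferentiableAt ℝ f x) (hg : DifferentiableAt ℝ g x)
    (i : Fin n) : pder i (fun z => f z - g z) x = pder i f x - pder i g x := by
  unfold pder; rw [fderiv_fun_sub hf hg]; simp

lemma pder_const_mul {f : E n → ℝ} (hf : DifferentiableAt ℝ f x) (c : ℝ)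
    (i : Fin n) : pder i (fun z => c * f z) x = c * pder i f x := by
  unfold pder; rw [fderiv_const_mul hf]; simp

lemma pder_sum {ι : Type*} (s : Finset ι) {f : ι → E n → ℝ}
    (hf : ∀ l ∈ s, DifferentiableAt ℝ (f l) x) (i : Fin n) :
    pder i (fun z => ∑ l ∈ s, f l z) x = ∑ l ∈ s, pder i (f l) x := by
  unfold pder; rw [fderiv_fun_sum hf]; simp

lemma contDiff_pder {f : E n → ℝ} (hf : ContDiff ℝ (⊤ : ℕ∞) f) (i : Fin n) :
    ContDiff ℝ (⊤ : ℕ∞) (pder i f) :=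
  (hf.fderiv_right (by simp)).clm_apply contDiff_const

lemma pder_pder_comm {f : E n → ℝ} (hf : ContDiff ℝ (⊤ : ℕ∞) f) (i k : Fin n) (x : E n) :
    pder i (pder k f) x = pder k (pder i f) x := by
  have hsymm : IsSymmSndFDerivAt ℝ f x := hf.contDiffAt.isSymmSndFDerivAt (by
    rw [minSmoothness_of_isRCLikeNormedField]; exact WithTop.coe_le_coe.mpr le_top)
  have hdf : DifferentiableAt ℝ (fderiv ℝ f) x :=
    ((hf.fderiv_right (m := 1) (WithTop.coe_le_coe.mpr le_top)).differentiable one_ne_zero).differentiableAt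
  have key : ∀ a b : Fin n, pder a (pder b f) x =
      fderiv ℝ (fderiv ℝ f) x (EuclideanSpace.single a 1) (EuclideanSpace.single b 1) := by
    intro a b
    unfold pder
    rw [show (fun z => fderiv ℝ f z (EuclideanSpace.single b 1))
        = fun z => (fderiv ℝ f z) ((fun _ : E n => EuclideanSpace.single b (1:ℝ)) z) from rfl,
      fderiv_clm_apply hdf (differentiableAt_const _)]
    simp
  rw [key, key, hsymm]

lemma pder_boundary_zero {N a : Fin n} (hne : a ≠ N) {g : E n → ℝ}
    (hg : DifferentiableAt ℝ g x) (h0 : ∀ y : E n, y N = 0 → g y = 0) (hx : x N = 0) :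
    pder a g x = 0 := by
  have hline : ∀ t : ℝ, (x + t • EuclideanSpace.single a (1:ℝ)) N = 0 := by
    intro t
    have : EuclideanSpace.single a (1:ℝ) N = 0 := by
      simp [EuclideanSpace.single_apply, (Ne.symm hne)]
    simp [PiLp.add_apply, PiLp.smul_apply, hx, this]
    exact fun h => (hne h.symm).elim
  have hl : HasDerivAt (fun t : ℝ => x + t • EuclideanSpace.single a (1:ℝ))
      (EuclideanSpace.single a 1) 0 := by
    simpa using ((hasDerivAt_id (0:ℝ)).smul_const (EuclideanSpace.single a (1:ℝ))).const_add x
  have h1 : HasDerivAt (fun t : ℝ => g (x + t • EuclideanSpace.single a (1:ℝ)))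
      (fderiv ℝ g x (EuclideanSpace.single a 1)) 0 := by
    have hg' : HasFDerivAt g (fderiv ℝ g x) (x + (0:ℝ) • EuclideanSpace.single a (1:ℝ)) := by
      simpa using hg.hasFDerivAt
    exact hg'.comp_hasDerivAt 0 hl
  have h2 : HasDerivAt (fun t : ℝ => g (x + t • EuclideanSpace.single a (1:ℝ))) 0 0 := by
    have : (fun t : ℝ => g (x + t • EuclideanSpace.single a (1:ℝ))) = fun _ => (0:ℝ) := by
      funext t; exact h0 _ (hline t)
    rw [this]; exact hasDerivAt_const 0 0
  have := h1.unique h2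
  simpa [pder] using this


section W
variable {n : ℕ}

/-- `w` function: sum of squares of shifted coordinates. -/
def wF (c : E n) (z : E n) : ℝ := ∑ i, (z i + c i) ^ 2

def wD (c : E n) (z : E n) : E n →L[ℝ] ℝ :=
  ∑ i, (2 * (z i + c i)) • (EuclideanSpace.proj i : E n →L[ℝ] ℝ)

lemma hasFDerivAt_wF (c z : E n) : HasFDerivAt (wF c) (wD c z) z := by
  refine HasFDerivAt.fun_sum fun i _ => ?_
  have h1 : HasFDerivAt (fun z : E n => z i + c i)
      (EuclideanSpace.proj i : E n →L[ℝ] ℝ) z :=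
    (EuclideanSpace.proj i : E n →L[ℝ] ℝ).hasFDerivAt.add_const (c i)
  have hsq : (fun z : E n => (z i + c i) ^ 2) = fun z : E n => (z i + c i) * (z i + c i) := by
    funext z; ring
  rw [hsq]
  have := h1.mul h1
  have h2 : ((z i + c i) • (EuclideanSpace.proj i : E n →L[ℝ] ℝ)
      + (z i + c i) • (EuclideanSpace.proj i : E n →L[ℝ] ℝ))
      = (2 * (z i + c i)) • (EuclideanSpace.proj i : E n →L[ℝ] ℝ) := by
    rw [← add_smul]; ring_nf
  rw [← h2]
  exact this

lemma wD_apply (c z : E n) (k : Fin n) :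
    wD c z (EuclideanSpace.single k 1) = 2 * (z k + c k) := by
  simp only [wD, ContinuousLinearMap.sum_apply, ContinuousLinearMap.smul_apply]
  have hp : ∀ j : Fin n, (EuclideanSpace.proj j : E n →L[ℝ] ℝ) (EuclideanSpace.single k 1)
      = EuclideanSpace.single k (1:ℝ) j := fun j => rfl
  simp only [hp, EuclideanSpace.single_apply]
  rw [Finset.sum_eq_single k]
  · simp
  · intro b _ hb; simp [hb]
  · simp

lemma continuous_wF (c : E n) : Continuous (wF c) := by
  unfold wF; fun_prop

end W

section V
variable {n : ℕ} (hn : 0 < n) (ε : ℝ)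

/-- abbreviation for the exponent. -/
def M (n : ℕ) : ℝ := ((n : ℝ) - 2) / 2

/-- shift vector -/
def cv (n : ℕ) (hn : 0 < n) (ε : ℝ) : E n := EuclideanSpace.single (nIdx n hn) ε

lemma vE_eq (z : E n) :
    vE n hn ε z = ε ^ M n * (wF (cv n hn ε) z) ^ (-(M n)) := by
  unfold vE M wF cv
  congr 1
  congr 1
  rw [← Finset.add_sum_erase Finset.univ _ (Finset.mem_univ (nIdx n hn))]
  congr 1
  · rw [EuclideanSpace.single_apply]; simp [add_comm]
  · refine Finset.sum_congr rfl fun a ha => ?_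
    rw [EuclideanSpace.single_apply, if_neg (Finset.ne_of_mem_erase ha)]
    simp

lemma hasFDerivAt_vE {z : E n} (hz : 0 < wF (cv n hn ε) z) :
    HasFDerivAt (vE n hn ε)
      ((ε ^ M n * (-(M n) * wF (cv n hn ε) z ^ (-(M n) - 1))) • wD (cv n hn ε) z) z := by
  have h1 : HasFDerivAt (fun z : E n => wF (cv n hn ε) z ^ (-(M n)))
      ((-(M n) * wF (cv n hn ε) z ^ (-(M n) - 1)) • wD (cv n hn ε) z) z :=
    (hasFDerivAt_wF _ z).rpow_const (Or.inl hz.ne')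
  have h2 := h1.const_mul (ε ^ M n)
  have : vE n hn ε = fun z => ε ^ M n * (wF (cv n hn ε) z) ^ (-(M n)) :=
    funext fun z => vE_eq hn ε z
  rw [this]
  refine h2.congr_fderiv ?_; rw [smul_smul]

lemma pder_vE {z : E n} (hz : 0 < wF (cv n hn ε) z) (i : Fin n) :
    pder i (vE n hn ε) z =
      ε ^ M n * (-(M n) * wF (cv n hn ε) z ^ (-(M n) - 1)) * (2 * (z i + cv n hn ε i)) := by
  rw [pder_eq_of_hasFDerivAt (hasFDerivAt_vE hn ε hz)]
  simp [wD_apply, mul_assoc]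


/-- The explicit form of the first partial of `vE`. -/
def gFun (l : Fin n) (z : E n) : ℝ :=
  (ε ^ M n * -(M n)) * (wF (cv n hn ε) z ^ (-(M n) - 1) * (2 * (z l + cv n hn ε l)))

/-- `gD` : derivative of `gFun` -/
lemma hasFDerivAt_gFun {x : E n} (hx : 0 < wF (cv n hn ε) x) (l : Fin n) :
    HasFDerivAt (gFun hn ε l)
      ((ε ^ M n * -(M n)) •
        ((wF (cv n hn ε) x ^ (-(M n) - 1)) • ((2:ℝ) • (EuclideanSpace.proj l : E n →L[ℝ] ℝ))
          + (2 * (x l + cv n hn ε l)) •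
            (((-(M n) - 1) * wF (cv n hn ε) x ^ (-(M n) - 2)) • wD (cv n hn ε) x))) x := by
  have h1 : HasFDerivAt (fun z : E n => wF (cv n hn ε) z ^ (-(M n) - 1))
      (((-(M n) - 1) * wF (cv n hn ε) x ^ (-(M n) - 2)) • wD (cv n hn ε) x) x := by
    have := (hasFDerivAt_wF (cv n hn ε) x).rpow_const (p := -(M n) - 1) (Or.inl hx.ne')
    have he : -(M n) - 1 - 1 = -(M n) - 2 := by ring
    rwa [he] at this
  have h2 : HasFDerivAt (fun z : E n => 2 * (z l + cv n hn ε l))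
      ((2:ℝ) • (EuclideanSpace.proj l : E n →L[ℝ] ℝ)) x := by
    exact ((EuclideanSpace.proj l : E n →L[ℝ] ℝ).hasFDerivAt.add_const _).const_mul 2
  exact ((h1.mul h2).const_mul _)

lemma eventuallyEq_pder_vE {x : E n} (hx : 0 < wF (cv n hn ε) x) (l : Fin n) :
    pder l (vE n hn ε) =ᶠ[nhds x] gFun hn ε l := by
  have hopen : IsOpen {z : E n | 0 < wF (cv n hn ε) z} :=
    isOpen_lt continuous_const (continuous_wF _)
  filter_upwards [hopen.mem_nhds hx] with z hz
  rw [pder_vE hn ε hz]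
  unfold gFun; ring

lemma differentiableAt_pder_vE {x : E n} (hx : 0 < wF (cv n hn ε) x) (l : Fin n) :
    DifferentiableAt ℝ (pder l (vE n hn ε)) x :=
  (Filter.EventuallyEq.differentiableAt_iff (eventuallyEq_pder_vE hn ε hx l)).2
    (hasFDerivAt_gFun hn ε hx l).differentiableAt

lemma pder_pder_vE {x : E n} (hx : 0 < wF (cv n hn ε) x) (l k : Fin n) :
    pder k (pder l (vE n hn ε)) x =
      (ε ^ M n * -(M n)) *
        ((wF (cv n hn ε) x ^ (-(M n) - 1)) * (2 * (if l = k then 1 else 0))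
          + (2 * (x l + cv n hn ε l)) *
            ((-(M n) - 1) * wF (cv n hn ε) x ^ (-(M n) - 2) * (2 * (x k + cv n hn ε k)))) := by
  rw [pder_congr (eventuallyEq_pder_vE hn ε hx l) k,
    pder_eq_of_hasFDerivAt (hasFDerivAt_gFun hn ε hx l) k]
  have hp : (EuclideanSpace.proj l : E n →L[ℝ] ℝ) (EuclideanSpace.single k 1)
      = if l = k then (1:ℝ) else 0 := by
    have : (EuclideanSpace.proj l : E n →L[ℝ] ℝ) (EuclideanSpace.single k 1)
        = EuclideanSpace.single k (1:ℝ) l := rfl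
    rw [this, EuclideanSpace.single_apply]
  simp only [ContinuousLinearMap.smul_apply, ContinuousLinearMap.add_apply,
    ContinuousLinearMap.smul_apply, wD_apply, hp, smul_eq_mul]

lemma wF_pos_boundary {x : E n} (hε : 0 < ε) (hx : x (nIdx n hn) = 0) :
    0 < wF (cv n hn ε) x := by
  have h1 : (x (nIdx n hn) + cv n hn ε (nIdx n hn)) ^ 2
      ≤ ∑ i, (x i + cv n hn ε i) ^ 2 :=
    Finset.single_le_sum (f := fun i => (x i + cv n hn ε i) ^ 2)
      (fun i _ => sq_nonneg _) (Finset.mem_univ _)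
  have h2 : cv n hn ε (nIdx n hn) = ε := by
    unfold cv; rw [EuclideanSpace.single_apply]; simp
  have : (0:ℝ) < (x (nIdx n hn) + cv n hn ε (nIdx n hn)) ^ 2 := by
    rw [h2, hx, zero_add]; positivity
  exact lt_of_lt_of_le this h1

lemma cv_apply_ne {a : Fin n} (ha : a ≠ nIdx n hn) : cv n hn ε a = 0 := by
  unfold cv; rw [EuclideanSpace.single_apply, if_neg ha]

end V
end DnPsi


set_option maxHeartbeats 2000000 in
/-- Boundary equation for `∂ₙ ψ`. -/
theorem dn_psi_boundary (n : ℕ) (hn : 3 ≤ n) (ε : ℝ) (hε : 0 < ε)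
    (V : E n → E n) (hV : ContDiff ℝ (⊤ : ℕ∞) V)
    (hVn : ∀ x : E n, x (nIdx n (by omega)) = 0 → V x (nIdx n (by omega)) = 0)
    (hVa : ∀ (x : E n) (a : Fin n), a ≠ nIdx n (by omega) →
      x (nIdx n (by omega)) = 0 → pder (nIdx n (by omega)) (fun z => V z a) x = 0)
    (hSnn : ∀ x : E n, x (nIdx n (by omega)) = 0 →
      pder (nIdx n (by omega)) (Smat V (nIdx n (by omega)) (nIdx n (by omega))) x =
        -(2 * (n : ℝ) / ((n : ℝ) - 2)) * (vE n (by omega) ε x)⁻¹ *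
          pder (nIdx n (by omega)) (vE n (by omega) ε) x *
          Smat V (nIdx n (by omega)) (nIdx n (by omega)) x) :
    ∀ x : E n, x (nIdx n (by omega)) = 0 →
      pder (nIdx n (by omega)) (psiF n (by omega) ε V) x =
        -(1 / (2 * ((n : ℝ) - 1))) * pder (nIdx n (by omega)) (vE n (by omega) ε) x *
            Smat V (nIdx n (by omega)) (nIdx n (by omega)) x +
          ((n : ℝ) / ((n : ℝ) - 2)) * (vE n (by omega) ε x)⁻¹ *
            pder (nIdx n (by omega)) (vE n (by omega) ε) x *
            psiF n (by omega) ε V x := by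
  intro x hx
  have hn0 : 0 < n := by omega
  have hnne : (n:ℝ) ≠ 0 := Nat.cast_ne_zero.mpr (by omega)
  have hnR : (3:ℝ) ≤ (n:ℝ) := by exact_mod_cast hn
  have hn1 : (n:ℝ) - 1 ≠ 0 := by linarith
  have hn2 : (n:ℝ) - 2 ≠ 0 := by linarith
  have hx' : x (nIdx n hn0) = 0 := hx
  -- shorthand
  set N : Fin n := nIdx n hn0 with hNdef
  show pder N (psiF n hn0 ε V) x
      = -(1 / (2 * ((n : ℝ) - 1))) * pder N (vE n hn0 ε) x * Smat V N N x
        + ((n : ℝ) / ((n : ℝ) - 2)) * (vE n hn0 ε x)⁻¹ * pder N (vE n hn0 ε) x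
          * psiF n hn0 ε V x
  have hP : 0 < DnPsi.wF (DnPsi.cv n hn0 ε) x := DnPsi.wF_pos_boundary hn0 ε hε hx'
  set P : ℝ := DnPsi.wF (DnPsi.cv n hn0 ε) x with hPdef
  set Mn : ℝ := DnPsi.M n with hMdef
  -- smoothness of the components of V
  have hVl : ∀ l : Fin n, ContDiff ℝ (⊤ : ℕ∞) (fun z => V z l) := fun l =>
    (EuclideanSpace.proj l : E n →L[ℝ] ℝ).contDiff.comp hV
  have hpderV : ∀ i l : Fin n, ContDiff ℝ (⊤ : ℕ∞) (pder i (fun z => V z l)) := fun i l =>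
    DnPsi.contDiff_pder (hVl l) i
  have hdivSm : ContDiff ℝ (⊤ : ℕ∞) (divV V) := by
    unfold divV
    exact ContDiff.sum fun i _ => DnPsi.contDiff_pder (hVl i) i
  -- boundary values
  have hVnx : V x N = 0 := hVn x hx'
  have hVax : ∀ a : Fin n, a ≠ N → pder N (fun z => V z a) x = 0 := fun a ha => hVa x a ha hx'
  -- the second normal derivative of V_N
  set Q : ℝ := pder N (pder N (fun z => V z N)) x with hQdef
  -- ∂_N div V = Q on the boundary
  have hQdiv : pder N (divV V) x = Q := by
    have h1 : pder N (divV V) x = ∑ i, pder N (pder i (fun z => V z i)) x := by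
      have : divV V = fun z => ∑ i, pder i (fun y => V y i) z := rfl
      rw [this]
      exact DnPsi.pder_sum Finset.univ
        (fun i _ => ((hpderV i i).differentiable (by simp)).differentiableAt) N
    rw [h1]
    rw [Finset.sum_eq_single N]
    · intro b _ hb
      rw [DnPsi.pder_pder_comm (hVl b) N b x]
      exact DnPsi.pder_boundary_zero hb
        (((hpderV N b).differentiable (by simp)).differentiableAt)
        (fun y hy => hVa y b hb hy) hx'
    · intro h; exact absurd (Finset.mem_univ N) h
  -- values of S and div V at x
  set S : ℝ := Smat V N N x with hSdef
  set dv : ℝ := divV V x with hdvdef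
  set e : ℝ := pder N (fun z => V z N) x with hedef
  have hSx : S = 2 * e - (2 / (n:ℝ)) * dv := by
    rw [hSdef, Smat]; simp [hedef, hdvdef]; ring
  -- derivative of S_NN in the normal direction
  have hdSnn : pder N (Smat V N N) x = 2 * Q - (2 / (n:ℝ)) * Q := by
    have hfun : Smat V N N = fun z =>
        pder N (fun y => V y N) z + pder N (fun y => V y N) z - 2 / (n:ℝ) * divV V z := by
      funext z; rw [Smat]; simp
    rw [hfun]
    have d1 : DifferentiableAt ℝ (pder N (fun y => V y N)) x :=
      ((hpderV N N).differentiable (by simp)).differentiableAt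
    have d2 : DifferentiableAt ℝ (fun z => 2 / (n:ℝ) * divV V z) x :=
      (hdivSm.differentiable (by simp)).differentiableAt.const_mul _
    rw [DnPsi.pder_sub (d1.fun_add d1) d2, DnPsi.pder_add d1 d1,
      DnPsi.pder_const_mul ((hdivSm.differentiable (by simp)).differentiableAt) (2 / (n:ℝ)),
      hQdiv]
    ring
  -- the hypothesis hSnn rewritten
  set vx : ℝ := vE n hn0 ε x with hvxdef
  set dN : ℝ := pder N (vE n hn0 ε) x with hdNdef
  have hQ : 2 * Q - (2 / (n:ℝ)) * Q =
      -(2 * (n:ℝ) / ((n:ℝ) - 2)) * vx⁻¹ * dN * S := by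
    rw [← hdSnn]; exact hSnn x hx'
  -- values of v and its derivatives at x
  set A : ℝ := P ^ (-(Mn)) with hAdef
  have hApos : 0 < A := Real.rpow_pos_of_pos hP _
  have hEa : 0 < ε ^ Mn := Real.rpow_pos_of_pos hε _
  have hvx : vx = ε ^ Mn * A := DnPsi.vE_eq hn0 ε x
  have hvx0 : vx ≠ 0 := by rw [hvx]; positivity
  have hB : P ^ (-(Mn) - 1) = A / P := by
    rw [hAdef, show -(Mn) - 1 = -(Mn) - 1 from rfl, Real.rpow_sub hP (-(Mn)) 1, Real.rpow_one]
  have hC : P ^ (-(Mn) - 2) = A / P / P := by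
    rw [show -(Mn) - 2 = -(Mn) - 1 - 1 by ring, Real.rpow_sub hP (-(Mn) - 1) 1,
      Real.rpow_one, hB]
  have hcN : DnPsi.cv n hn0 ε N = ε := by
    unfold DnPsi.cv; rw [EuclideanSpace.single_apply]; simp [hNdef]
  have hdN : dN = ε ^ Mn * (-(Mn) * (A / P)) * (2 * ε) := by
    rw [hdNdef, DnPsi.pder_vE hn0 ε hP N, ← hPdef, ← hMdef, hB, hcN, hx', zero_add]
  have hda : ∀ a : Fin n, a ≠ N → pder a (vE n hn0 ε) x
      = ε ^ Mn * (-(Mn) * (A / P)) * (2 * x a) := by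
    intro a ha
    rw [DnPsi.pder_vE hn0 ε hP a, ← hPdef, ← hMdef, hB, DnPsi.cv_apply_ne hn0 ε ha, add_zero]
  have hDa : ∀ a : Fin n, a ≠ N → pder N (pder a (vE n hn0 ε)) x
      = (ε ^ Mn * -(Mn)) * ((2 * x a) * ((-(Mn) - 1) * (A / P / P) * (2 * ε))) := by
    intro a ha
    rw [DnPsi.pder_pder_vE hn0 ε hP a N, ← hPdef, ← hMdef, hB, hC, if_neg ha, hcN, hx',
      zero_add, DnPsi.cv_apply_ne hn0 ε ha, add_zero]
    ring
  -- differentiability at x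
  have hvdiff : DifferentiableAt ℝ (vE n hn0 ε) x :=
    (DnPsi.hasFDerivAt_vE hn0 ε hP).differentiableAt
  have hpddiff : ∀ l : Fin n, DifferentiableAt ℝ (pder l (vE n hn0 ε)) x := fun l =>
    DnPsi.differentiableAt_pder_vE hn0 ε hP l
  have hVldiff : ∀ l : Fin n, DifferentiableAt ℝ (fun z => V z l) x := fun l =>
    ((hVl l).differentiable (by simp)).differentiableAt
  -- ψ at x
  have hpsix : psiF n hn0 ε V x
      = (∑ a ∈ Finset.univ.erase N, pder a (vE n hn0 ε) x * V x a)
        + ((n:ℝ) - 2) / (2 * (n:ℝ)) * vx * dv := by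
    rw [psiF]
    rw [← Finset.add_sum_erase Finset.univ _ (Finset.mem_univ N), hVnx, mul_zero, zero_add]
  -- expansion of ∂_N ψ
  have hstep : pder N (psiF n hn0 ε V) x
      = (∑ l, (pder N (pder l (vE n hn0 ε)) x * V x l
          + pder l (vE n hn0 ε) x * pder N (fun z => V z l) x))
        + ((n:ℝ) - 2) / (2 * (n:ℝ)) * (dN * dv + vx * Q) := by
    have hfun : psiF n hn0 ε V = fun z => (∑ l, pder l (vE n hn0 ε) z * V z l)
        + ((n:ℝ) - 2) / (2 * (n:ℝ)) * vE n hn0 ε z * divV V z := rfl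
    rw [hfun]
    have dsum : ∀ l : Fin n, DifferentiableAt ℝ (fun z => pder l (vE n hn0 ε) z * V z l) x :=
      fun l => (hpddiff l).mul (hVldiff l)
    have d1 : DifferentiableAt ℝ (fun z => ∑ l, pder l (vE n hn0 ε) z * V z l) x :=
      DifferentiableAt.fun_sum fun l _ => dsum l
    have ddiv : DifferentiableAt ℝ (divV V) x := (hdivSm.differentiable (by simp)).differentiableAt
    have d2 : DifferentiableAt ℝ
        (fun z => ((n:ℝ) - 2) / (2 * (n:ℝ)) * vE n hn0 ε z * divV V z) x :=
      (hvdiff.const_mul _).mul ddiv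
    rw [DnPsi.pder_add d1 d2, DnPsi.pder_sum Finset.univ (fun l _ => dsum l)]
    congr 1
    · exact Finset.sum_congr rfl fun l _ => DnPsi.pder_mul (hpddiff l) (hVldiff l) N
    · have hfun2 : (fun z => ((n:ℝ) - 2) / (2 * (n:ℝ)) * vE n hn0 ε z * divV V z)
          = fun z => (fun y => ((n:ℝ) - 2) / (2 * (n:ℝ)) * vE n hn0 ε y) z * divV V z := rfl
      rw [hfun2, DnPsi.pder_mul (hvdiff.const_mul _) ddiv N,
        DnPsi.pder_const_mul hvdiff (((n:ℝ) - 2) / (2 * (n:ℝ))) N, hQdiv]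
      ring
  -- split the sum at N
  have hsplit : (∑ l, (pder N (pder l (vE n hn0 ε)) x * V x l
        + pder l (vE n hn0 ε) x * pder N (fun z => V z l) x))
      = (∑ a ∈ Finset.univ.erase N, pder N (pder a (vE n hn0 ε)) x * V x a) + dN * e := by
    rw [← Finset.add_sum_erase Finset.univ _ (Finset.mem_univ N), hVnx, mul_zero, zero_add]
    rw [Finset.sum_congr rfl (fun a ha => by
      rw [hVax a (Finset.ne_of_mem_erase ha), mul_zero, add_zero])]
    ring
  -- factor the sums
  set T : ℝ := ∑ a ∈ Finset.univ.erase N, x a * V x a with hTdef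
  have hsum1 : (∑ a ∈ Finset.univ.erase N, pder N (pder a (vE n hn0 ε)) x * V x a)
      = (ε ^ Mn * -(Mn)) * (2 * ((-(Mn) - 1) * (A / P / P) * (2 * ε))) * T := by
    rw [hTdef, Finset.mul_sum]
    refine Finset.sum_congr rfl fun a ha => ?_
    rw [hDa a (Finset.ne_of_mem_erase ha)]; ring
  have hsum2 : (∑ a ∈ Finset.univ.erase N, pder a (vE n hn0 ε) x * V x a)
      = ε ^ Mn * (-(Mn) * (A / P)) * 2 * T := by
    rw [hTdef, Finset.mul_sum]
    refine Finset.sum_congr rfl fun a ha => ?_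
    rw [hda a (Finset.ne_of_mem_erase ha)]; ring
  -- solve for Q and e
  have h2n' : (2:ℝ) - 2 / (n:ℝ) ≠ 0 := by
    have h : (2:ℝ) - 2 / (n:ℝ) = 2 * ((n:ℝ) - 1) / (n:ℝ) := by field_simp
    rw [h]
    exact div_ne_zero (by intro h'; apply hn1; linarith [mul_eq_zero.1 h']) hnne
  have hQval : Q = -((n:ℝ)^2 / (((n:ℝ) - 1) * ((n:ℝ) - 2))) * vx⁻¹ * dN * S := by
    field_simp at hQ ⊢
    linear_combination hQ
  have heval : e = (S + (2 / (n:ℝ)) * dv) / 2 := by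
    rw [hSx]; ring
  have hMval : Mn = ((n:ℝ) - 2) / 2 := rfl
  -- final computation
  rw [hstep, hsplit, hsum1, hpsix, hsum2, hQval, heval, hdN, hvx, hMval]
  have hε' : ε ≠ 0 := hε.ne'
  have hEa' : ε ^ Mn ≠ 0 := hEa.ne'
  have hA' : A ≠ 0 := hApos.ne'
  have hP' : P ≠ 0 := hP.ne'
  field_simp
  ring
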